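/- Structure Theorem for Unions of Sets of Lengths: Let H be an atomic cancellative monoid with finite nonempty set of distances Δ(H) and d = min Δ(H). Suppose that either ρ_k(H) = ∞ for some k ∈ ℕ, or there is M ∈ ℕ with ρ_k(H) − ρ_{k−1}(H) ≤ M for all k ≥ 2. Then there exist constants k* and M* ∈ ℕ such that for all k ≥ k*, the set U_k(H) is an almost arithmetical progression with difference d and bound M*. Moreover, if ρ_k(H) < ∞ for all k ∈ ℕ, then the assertion holds with k* = 1. -/

import Mathlib

open scoped Classical ENNReal

/-- The set of lengths of `a`: all `k` such that `a` is a product of `k` irreducibles,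
with the convention `L(a) = {0}` for units. -/
noncomputable def lengths {M : Type*} [Monoid M] (a : M) : Set ℕ :=
  if IsUnit a then {0}
  else {k | ∃ l : List M, l.length = k ∧ (∀ x ∈ l, Irreducible x) ∧ l.prod = a}

/-- A monoid is atomic if every nonunit is a finite product of irreducibles (atoms). -/
def Atomic (M : Type*) [Monoid M] : Prop :=
  ∀ a : M, ¬IsUnit a → ∃ l : List M, (∀ x ∈ l, Irreducible x) ∧ l.prod = a

/-- The set of distances of a set `L ⊆ ℕ`. -/
def distances (L : Set ℕ) : Set ℕ :=
  {d | 0 < d ∧ ∃ k ∈ L, k + d ∈ L ∧ ∀ m ∈ L, k ≤ m → m ≤ k + d → m = k ∨ m = k + d}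

/-- The set of distances `Δ(H)` of a monoid. -/
def DeltaH (M : Type*) [Monoid M] : Set ℕ :=
  ⋃ a : M, distances (lengths a)

/-- The union `U_k(H)` of all sets of lengths containing `k`. -/
def lengthUnion (M : Type*) [Monoid M] (k : ℕ) : Set ℕ :=
  {ℓ | ∃ l1 l2 : List M, l1.length = k ∧ l2.length = ℓ ∧
      (∀ x ∈ l1, Irreducible x) ∧ (∀ x ∈ l2, Irreducible x) ∧ l1.prod = l2.prod}

/-- The `k`-th elasticity `ρ_k(H) = sup U_k(H)`, valued in `ℝ≥0∞`. -/
noncomputable def rhoK (M : Type*) [Monoid M] (k : ℕ) : ℝ≥0∞ :=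
  ⨆ ℓ ∈ lengthUnion M k, (ℓ : ℝ≥0∞)

/-- `λ_k(H) = min U_k(H)`. -/
noncomputable def lamK (M : Type*) [Monoid M] (k : ℕ) : ℕ :=
  sInf (lengthUnion M k)

/-- The elasticity `ρ(L) = sup L / min L` of a set of lengths, with `ρ({0}) = 1`. -/
noncomputable def setElasticity (L : Set ℕ) : ℝ≥0∞ :=
  if L = {0} then 1 else (⨆ n ∈ L, (n : ℝ≥0∞)) / ((sInf L : ℕ) : ℝ≥0∞)

/-- The elasticity `ρ(H) = sup { ρ(L(a)) : a ∈ H }`. -/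
noncomputable def elasticity (M : Type*) [Monoid M] : ℝ≥0∞ :=
  ⨆ a : M, setElasticity (lengths a)

/-- The principal left ideal `Ha`. -/
def leftIdeal {M : Type*} [Monoid M] (a : M) : Set M := Set.range (· * a)

/-- The principal right ideal `aH`. -/
def rightIdeal {M : Type*} [Monoid M] (a : M) : Set M := Set.range (a * ·)

/-- `A` is a generating set of the monoid `M`. -/
def Generates {M : Type*} [Monoid M] (A : Set M) : Prop :=
  ∀ a : M, ∃ l : List M, (∀ x ∈ l, x ∈ A) ∧ l.prod = a

/-- `L` is an almost arithmetical progression (AAP) with difference `d` and bound `M`: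
`L = y + (L₁ ∪ L⋆ ∪ L₂) ⊆ y + dℤ` where `L⋆` is a nonempty (finite or infinite)
arithmetical progression with difference `d` and `min L⋆ = 0`, `L₁ ⊆ [-M, -1]`, and
`L₂ ⊆ sup L⋆ + [1, M]` (with `L₂ = ∅` if `L⋆` is infinite). -/
def IsAAP (d M : ℕ) (L : Set ℤ) : Prop :=
  0 < d ∧
  ∃ (y : ℤ) (L₁ L₂ : Set ℤ),
    L₁ ⊆ Set.Icc (-(M : ℤ)) (-1) ∧
    (∀ x ∈ L, ∃ z : ℤ, x = y + (d : ℤ) * z) ∧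
    ((∃ ℓ : ℕ, L₂ ⊆ Set.Icc ((ℓ : ℤ) * d + 1) ((ℓ : ℤ) * d + M) ∧
        L = (fun x => y + x) '' (L₁ ∪ (fun n : ℕ => (n : ℤ) * d) '' Set.Iic ℓ ∪ L₂)) ∨
      L = (fun x => y + x) '' (L₁ ∪ Set.range fun n : ℕ => (n : ℤ) * d))

/-!
Let `d = min Δ(H)` be realised by lengths `y, y + d` of one element. Every distance is a multiple
of `d`, since otherwise a power of that element times another one would have two lengths closer
than `d`; hence `U_k ⊆ k + dℕ`. Concatenating factorizations, `y + d ∈ U_y` gives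
`k + d j ∈ U_k` whenever `j y ≤ k`, a progression of length about `k / y` starting at `k`.

If some `U_{k₁}` is unbounded, its gaps are at most `max Δ(H)`, so adding it to these
progressions fills the whole class of `k` above a constant `k₀`; for `k₀ ≤ x ≤ k` the symmetry
`x ∈ U_k ↔ k ∈ U_x` gives the same. So `U_k` is an infinite AAP for `k ≥ k₀`.

If `ρ_k ≤ ρ_{k-1} + c`, the map `i ↦ ρ_{k-i} + i` descends from `ρ_k` to `k` in steps below `c`,
so every `x ≡ k` in `[k, ρ_k - m]` is `ρ_{k-i} + (i + d j)` with `j < c` and `c y < i`, so lies in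
`U_k`; by symmetry the same holds on `[min U_k + m, k]`. So `U_k` is a finite AAP whose bound
depends only on `c`, `y` and `d`.
-/

section Factorizations

variable {M : Type*} [Monoid M]

lemma lengthUnion_symm {k x : ℕ} (h : x ∈ lengthUnion M k) : k ∈ lengthUnion M x := by
  obtain ⟨l₁, l₂, h₁, h₂, hi₁, hi₂, hp⟩ := h
  exact ⟨l₂, l₁, h₂, h₁, hi₂, hi₁, hp.symm⟩

lemma add_mem_lengthUnion {j k x y : ℕ} (hx : x ∈ lengthUnion M j) (hy : y ∈ lengthUnion M k) :
    x + y ∈ lengthUnion M (j + k) := by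
  obtain ⟨a₁, a₂, rfl, rfl, ha₁, ha₂, hp⟩ := hx
  obtain ⟨b₁, b₂, rfl, rfl, hb₁, hb₂, hq⟩ := hy
  exact ⟨a₁ ++ b₁, a₂ ++ b₂, List.length_append, List.length_append,
    List.forall_mem_append.mpr ⟨ha₁, hb₁⟩, List.forall_mem_append.mpr ⟨ha₂, hb₂⟩, by simp [hp, hq]⟩

lemma mul_mem_lengthUnion {k x : ℕ} (h : x ∈ lengthUnion M k) (n : ℕ) :
    n * x ∈ lengthUnion M (n * k) := by
  induction n with
  | zero => exact ⟨[], [], by simp, by simp, by simp, by simp, rfl⟩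
  | succ n ih => simpa [add_mul] using add_mem_lengthUnion ih h

lemma self_mem_lengthUnion {u : M} (hu : Irreducible u) (k : ℕ) : k ∈ lengthUnion M k := by
  simpa using mul_mem_lengthUnion (M := M) ⟨[u], [u], rfl, rfl, by simpa, by simpa, rfl⟩ k

lemma exists_irreducible_of_mem_lengthUnion {k x : ℕ} (h : x ∈ lengthUnion M k) (hx : 0 < x) :
    ∃ u : M, Irreducible u := by
  obtain ⟨-, l, -, rfl, -, hl, -⟩ := h
  obtain ⟨u, hu⟩ := List.exists_mem_of_length_pos hx
  exact ⟨u, hl u hu⟩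

lemma add_mul_mem_lengthUnion {u : M} (hu : Irreducible u) {y d k j : ℕ}
    (hy : y + d ∈ lengthUnion M y) (hj : j * y ≤ k) : k + d * j ∈ lengthUnion M k := by
  have h := add_mem_lengthUnion (mul_mem_lengthUnion hy j) (self_mem_lengthUnion hu (k - j * y))
  rwa [show j * (y + d) + (k - j * y) = k + d * j by rw [mul_add, mul_comm j d]; omega,
    Nat.add_sub_cancel' hj] at h

lemma mem_lengths_iff {a : M} (ha : ¬IsUnit a) {k : ℕ} :
    k ∈ lengths a ↔ ∃ l : List M, l.length = k ∧ (∀ x ∈ l, Irreducible x) ∧ l.prod = a := by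
  rw [lengths, if_neg ha]; rfl

lemma not_isUnit_of_mem_distances {a : M} {e : ℕ} (he : e ∈ distances (lengths a)) :
    ¬IsUnit a := by
  intro ha
  obtain ⟨he, k, hk, hke, -⟩ := he
  simp only [lengths, if_pos ha, Set.mem_singleton_iff] at hk hke
  omega

variable [IsDedekindFiniteMonoid M]

lemma not_isUnit_prod_of_irreducible {l : List M} (hl : ∀ x ∈ l, Irreducible x)
    (hne : l ≠ []) : ¬IsUnit l.prod := by
  obtain ⟨x, t, rfl⟩ := List.exists_cons_of_ne_nil hne
  rw [List.prod_cons, IsUnit.mul_iff]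
  exact fun h => (hl x List.mem_cons_self).not_isUnit h.1

lemma mem_lengthUnion_iff {k x : ℕ} :
    x ∈ lengthUnion M k ↔ ∃ a : M, k ∈ lengths a ∧ x ∈ lengths a := by
  constructor
  · rintro ⟨l₁, l₂, rfl, rfl, hi₁, hi₂, hp⟩
    by_cases ha : IsUnit l₁.prod
    · have h₁ : l₁ = [] := by_contra fun h => not_isUnit_prod_of_irreducible hi₁ h ha
      have h₂ : l₂ = [] := by_contra fun h => not_isUnit_prod_of_irreducible hi₂ h (hp ▸ ha)
      subst h₁ h₂
      exact ⟨1, by simp [lengths]⟩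
    · exact ⟨l₁.prod, (mem_lengths_iff ha).mpr ⟨l₁, rfl, hi₁, rfl⟩,
        (mem_lengths_iff ha).mpr ⟨l₂, rfl, hi₂, hp.symm⟩⟩
  · rintro ⟨a, hk, hx⟩
    by_cases ha : IsUnit a
    · simp only [lengths, if_pos ha, Set.mem_singleton_iff] at hk hx
      subst hk hx
      exact ⟨[], [], rfl, rfl, by simp, by simp, rfl⟩
    · obtain ⟨l₁, h₁, hi₁, hp₁⟩ := (mem_lengths_iff ha).mp hk
      obtain ⟨l₂, h₂, hi₂, hp₂⟩ := (mem_lengths_iff ha).mp hx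
      exact ⟨l₁, l₂, h₁, h₂, hi₁, hi₂, hp₁.trans hp₂.symm⟩

lemma pos_of_mem_lengthUnion {k x : ℕ} (h : x ∈ lengthUnion M k) (hk : 0 < k) : 0 < x := by
  obtain ⟨l₁, l₂, rfl, rfl, hi₁, -, hp⟩ := h
  refine List.length_pos_iff.mpr fun h => not_isUnit_prod_of_irreducible hi₁ ?_ ?_
  · exact List.length_pos_iff.mp hk
  · simp [hp, h]

lemma eq_one_of_mem_lengthUnion_one {x : ℕ} (h : x ∈ lengthUnion M 1) : x = 1 := by
  obtain ⟨l₁, l₂, h₁, rfl, hi₁, hi₂, hp⟩ := h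
  obtain ⟨u, rfl⟩ := List.length_eq_one_iff.mp h₁
  have hu : Irreducible u := hi₁ u List.mem_cons_self
  obtain ⟨v, t, rfl⟩ : ∃ v t, l₂ = v :: t :=
    List.exists_cons_of_ne_nil fun h => hu.not_isUnit (by simp_all)
  simp only [List.prod_cons, List.prod_nil, mul_one, List.forall_mem_cons] at hp hi₂
  rcases hu.isUnit_or_isUnit hp with hv | ht
  · exact absurd hv hi₂.1.not_isUnit
  · have : t = [] := by_contra fun h => not_isUnit_prod_of_irreducible hi₂.2 h ht
    simp [this]

lemma add_mem_lengths_mul {a b : M} (ha : ¬IsUnit a) (hb : ¬IsUnit b) {x y : ℕ}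
    (hx : x ∈ lengths a) (hy : y ∈ lengths b) : x + y ∈ lengths (a * b) := by
  obtain ⟨l₁, rfl, hi₁, rfl⟩ := (mem_lengths_iff ha).mp hx
  obtain ⟨l₂, rfl, hi₂, rfl⟩ := (mem_lengths_iff hb).mp hy
  rw [mem_lengths_iff (by simp [ha])]
  exact ⟨l₁ ++ l₂, List.length_append, List.forall_mem_append.mpr ⟨hi₁, hi₂⟩, List.prod_append⟩

lemma mul_mem_lengths_pow {a : M} (ha : ¬IsUnit a) {x : ℕ} (hx : x ∈ lengths a) {n : ℕ}
    (hn : n ≠ 0) : n * x ∈ lengths (a ^ n) := by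
  induction n with
  | zero => exact absurd rfl hn
  | succ n ih =>
    rcases eq_or_ne n 0 with rfl | hn
    · simpa using hx
    · rw [pow_succ, add_mul, one_mul]
      exact add_mem_lengths_mul (by rwa [isUnit_pow_iff hn]) ha (ih hn) hx

end Factorizations

section Distances

variable {L : Set ℕ}

lemma exists_mem_distances_of_lt {u v : ℕ} (hu : u ∈ L) (hv : v ∈ L) (huv : u < v) :
    ∃ w ∈ L, u < w ∧ w ≤ v ∧ w - u ∈ distances L := by
  have hS : {z | z ∈ L ∧ u < z ∧ z ≤ v}.Nonempty := ⟨v, hv, huv, le_rfl⟩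
  obtain ⟨hwL, hwu, hwv⟩ := Nat.sInf_mem hS
  set w := sInf {z | z ∈ L ∧ u < z ∧ z ≤ v}
  refine ⟨w, hwL, hwu, hwv, by omega, u, hu, ?_⟩
  rw [Nat.add_sub_cancel' hwu.le]
  refine ⟨hwL, fun m hm hum hmw => ?_⟩
  rcases hum.eq_or_lt with rfl | hum
  · exact Or.inl rfl
  · exact Or.inr (hmw.antisymm (Nat.sInf_le ⟨hm, hum, hmw.trans hwv⟩))

lemma modEq_of_forall_mem_distances_dvd {d : ℕ} (hd : ∀ e ∈ distances L, d ∣ e) {u v : ℕ}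
    (hu : u ∈ L) (hv : v ∈ L) : u ≡ v [MOD d] := by
  wlog huv : u ≤ v generalizing u v
  · exact (this hv hu (le_of_not_ge huv)).symm
  induction h : v - u using Nat.strong_induction_on generalizing u with
  | _ n ih =>
    rcases huv.eq_or_lt with rfl | hlt
    · rfl
    obtain ⟨w, hw, huw, hwv, hdist⟩ := exists_mem_distances_of_lt hu hv hlt
    exact ((Nat.modEq_iff_dvd' huw.le).mpr (hd _ hdist)).trans (ih (v - w) (by omega) hw hwv rfl)

lemma exists_mem_Icc_of_forall_mem_distances_le {D : ℕ} (hD : D ∈ upperBounds (distances L))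
    {u v T : ℕ} (hu : u ∈ L) (hv : v ∈ L) (huT : u ≤ T) (hTv : T ≤ v) :
    ∃ w ∈ L, T ≤ w ∧ w ≤ T + D := by
  induction h : T - u using Nat.strong_induction_on generalizing u with
  | _ n ih =>
    rcases huT.eq_or_lt with rfl | huT
    · exact ⟨u, hu, le_rfl, Nat.le_add_right _ _⟩
    obtain ⟨w, hw, huw, -, hdist⟩ := exists_mem_distances_of_lt hu hv (huT.trans_le hTv)
    rcases le_or_gt T w with hTw | hwT
    · exact ⟨w, hw, hTw, by have := hD hdist; omega⟩
    · exact ih (T - w) (by omega) hw hwT.le rfl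

end Distances

section SetOfDistances

variable {M : Type*} [Monoid M]

lemma pos_of_mem_deltaH {e : ℕ} (he : e ∈ DeltaH M) : 0 < e := by
  obtain ⟨a, ha⟩ := Set.mem_iUnion.mp he
  exact ha.1

lemma sInf_deltaH_le_sub {a : M} {u v : ℕ} (hu : u ∈ lengths a) (hv : v ∈ lengths a)
    (huv : u < v) : sInf (DeltaH M) ≤ v - u := by
  obtain ⟨w, -, huw, hwv, hdist⟩ := exists_mem_distances_of_lt hu hv huv
  exact (Nat.sInf_le (Set.mem_iUnion.mpr ⟨a, hdist⟩)).trans (by omega)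

variable [IsDedekindFiniteMonoid M]

/-- If `x, x + d ∈ L(a)` and `y, y + e ∈ L(b)` with `e = q d + r`, then `a ^ q * b` has two
lengths at distance `r`, so `r = 0` by minimality of `d`. -/
lemma sInf_deltaH_dvd {e : ℕ} (he : e ∈ DeltaH M) : sInf (DeltaH M) ∣ e := by
  set d := sInf (DeltaH M)
  obtain ⟨a, ha⟩ : ∃ a : M, d ∈ distances (lengths a) :=
    Set.mem_iUnion.mp (Nat.sInf_mem ⟨e, he⟩)
  obtain ⟨b, hb⟩ : ∃ b : M, e ∈ distances (lengths b) := Set.mem_iUnion.mp he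
  have hau := not_isUnit_of_mem_distances ha
  have hbu := not_isUnit_of_mem_distances hb
  obtain ⟨hd, x, hx, hxd, -⟩ := ha
  obtain ⟨-, y, hy, hye, -⟩ := hb
  set q := e / d
  have hq : q ≠ 0 := (Nat.div_pos (Nat.sInf_le he) hd).ne'
  have hqu : ¬IsUnit (a ^ q) := by rwa [isUnit_pow_iff hq]
  have h₁ := add_mem_lengths_mul hqu hbu (mul_mem_lengths_pow hau hxd hq) hy
  have h₂ := add_mem_lengths_mul hqu hbu (mul_mem_lengths_pow hau hx hq) hye
  have hdiv : d * q + e % d = e := Nat.div_add_mod e d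
  have hmul : q * (x + d) = q * x + d * q := by ring
  by_contra hndvd
  have hr : 0 < e % d := Nat.pos_of_ne_zero fun h => hndvd (Nat.dvd_of_mod_eq_zero h)
  have := sInf_deltaH_le_sub h₁ h₂ (by omega)
  have := Nat.mod_lt e hd
  omega

lemma modEq_of_mem_lengthUnion {k x : ℕ} (h : x ∈ lengthUnion M k) :
    x ≡ k [MOD sInf (DeltaH M)] := by
  obtain ⟨a, hk, hx⟩ := mem_lengthUnion_iff.mp h
  exact modEq_of_forall_mem_distances_dvd
    (fun e he => sInf_deltaH_dvd (Set.mem_iUnion.mpr ⟨a, he⟩)) hx hk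

lemma exists_mem_lengthUnion_Icc {D : ℕ} (hD : D ∈ upperBounds (DeltaH M)) {k x T : ℕ}
    (h : x ∈ lengthUnion M k) (hkT : k ≤ T) (hTx : T ≤ x) :
    ∃ w ∈ lengthUnion M k, T ≤ w ∧ w ≤ T + D := by
  obtain ⟨a, hk, hx⟩ := mem_lengthUnion_iff.mp h
  obtain ⟨w, hw, hTw, hwT⟩ := exists_mem_Icc_of_forall_mem_distances_le
    (fun _ he => hD (Set.mem_iUnion.mpr ⟨a, he⟩)) hk hx hkT hTx
  exact ⟨w, mem_lengthUnion_iff.mpr ⟨a, hk, hw⟩, hTw, hwT⟩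

lemma exists_add_sInf_deltaH_mem_lengthUnion (hne : (DeltaH M).Nonempty) :
    ∃ y, y + sInf (DeltaH M) ∈ lengthUnion M y := by
  obtain ⟨a, -, y, hy, hyd, -⟩ := Set.mem_iUnion.mp (Nat.sInf_mem hne)
  exact ⟨y, mem_lengthUnion_iff.mpr ⟨a, hy, hyd⟩⟩

end SetOfDistances

section AlmostArithmeticalProgressions

variable {d Mst y : ℕ} {S : Set ℕ}

lemma exists_eq_add_mul_of_modEq (hmod : ∀ u ∈ S, u ≡ y [MOD d]) :
    ∀ x ∈ (Nat.cast : ℕ → ℤ) '' S, ∃ z : ℤ, x = y + d * z := by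
  rintro _ ⟨u, hu, rfl⟩
  obtain ⟨t, ht⟩ := (hmod u hu).symm.dvd
  exact ⟨t, by linarith⟩

lemma eq_add_mul_of_modEq_of_le {u : ℕ} (hmod : u ≡ y [MOD d]) (hyu : y ≤ u) :
    ∃ n, u = y + d * n := by
  obtain ⟨n, hn⟩ := (Nat.modEq_iff_dvd' hyu).mp hmod.symm
  exact ⟨n, by omega⟩

lemma isAAP_of_forall_add_mul_mem (hd : 0 < d) (hmod : ∀ u ∈ S, u ≡ y [MOD d])
    (hlow : ∀ u ∈ S, y ≤ u + Mst) (hfull : ∀ n, y + d * n ∈ S) :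
    IsAAP d Mst ((Nat.cast : ℕ → ℤ) '' S) := by
  refine ⟨hd, y, (fun u : ℕ => (u : ℤ) - y) '' {u ∈ S | u < y}, ∅, ?_,
    exists_eq_add_mul_of_modEq hmod, Or.inr ?_⟩
  · rintro _ ⟨u, ⟨hu, huy⟩, rfl⟩
    have := hlow u hu
    constructor <;> dsimp only <;> omega
  · ext w
    simp only [Set.mem_image, Set.mem_union, Set.mem_ofPred_eq, Set.mem_range]
    constructor
    · rintro ⟨u, hu, rfl⟩
      rcases lt_or_ge u y with huy | hyu
      · exact ⟨u - y, Or.inl ⟨u, ⟨hu, huy⟩, rfl⟩, by ring⟩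
      · obtain ⟨n, rfl⟩ := eq_add_mul_of_modEq_of_le (hmod u hu) hyu
        exact ⟨n * d, Or.inr ⟨n, rfl⟩, by push_cast; ring⟩
    · rintro ⟨_, ⟨u, ⟨hu, -⟩, rfl⟩ | ⟨n, rfl⟩, rfl⟩
      · exact ⟨u, hu, by ring⟩
      · exact ⟨y + d * n, hfull n, by push_cast; ring⟩

lemma isAAP_of_forall_add_mul_mem_of_le (hd : 0 < d) {c : ℕ} (hmod : ∀ u ∈ S, u ≡ y [MOD d])
    (hlow : ∀ u ∈ S, y ≤ u + Mst) (hhigh : ∀ u ∈ S, u ≤ y + d * c + Mst)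
    (hfull : ∀ n ≤ c, y + d * n ∈ S) :
    IsAAP d Mst ((Nat.cast : ℕ → ℤ) '' S) := by
  refine ⟨hd, y, (fun u : ℕ => (u : ℤ) - y) '' {u ∈ S | u < y},
    (fun u : ℕ => (u : ℤ) - y) '' {u ∈ S | y + d * c < u}, ?_,
    exists_eq_add_mul_of_modEq hmod, Or.inl ⟨c, ?_, ?_⟩⟩
  · rintro _ ⟨u, ⟨hu, huy⟩, rfl⟩
    have := hlow u hu
    constructor <;> dsimp only <;> omega
  · rintro _ ⟨u, ⟨hu, hcu⟩, rfl⟩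
    have := hhigh u hu
    constructor <;> dsimp only <;> nlinarith
  · ext w
    simp only [Set.mem_image, Set.mem_union, Set.mem_ofPred_eq, Set.mem_Iic]
    constructor
    · rintro ⟨u, hu, rfl⟩
      rcases lt_or_ge u y with huy | hyu
      · exact ⟨u - y, Or.inl (Or.inl ⟨u, ⟨hu, huy⟩, rfl⟩), by ring⟩
      rcases le_or_gt u (y + d * c) with huc | hcu
      · obtain ⟨n, rfl⟩ := eq_add_mul_of_modEq_of_le (hmod u hu) hyu
        have hn : n ≤ c := Nat.le_of_mul_le_mul_left (by omega) hd
        exact ⟨n * d, Or.inl (Or.inr ⟨n, hn, rfl⟩), by push_cast; ring⟩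
      · exact ⟨u - y, Or.inr ⟨u, ⟨hu, hcu⟩, rfl⟩, by ring⟩
    · rintro ⟨_, (⟨u, ⟨hu, -⟩, rfl⟩ | ⟨n, hn, rfl⟩) | ⟨u, ⟨hu, -⟩, rfl⟩, rfl⟩
      · exact ⟨u, hu, by ring⟩
      · exact ⟨y + d * n, hfull n hn, by push_cast; ring⟩
      · exact ⟨u, hu, by ring⟩

end AlmostArithmeticalProgressions

section UnboundedElasticity

variable {M : Type*} [Monoid M] [IsDedekindFiniteMonoid M] {u : M} {y D k₁ : ℕ}

/-- Large `x` is reached from an element of `U k₁` just below `x - K` by adding `K + d s` with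
`d s ≤ D`, which lies in `U K`. -/
lemma mem_lengthUnion_add_of_not_bddAbove (hu : Irreducible u) (hd : 0 < sInf (DeltaH M))
    (hy : y + sInf (DeltaH M) ∈ lengthUnion M y) (hD : D ∈ upperBounds (DeltaH M))
    (hunb : ¬BddAbove (lengthUnion M k₁)) {K x : ℕ} (hK : D * y ≤ K) (hx : k₁ + K ≤ x)
    (hxmod : x ≡ k₁ + K [MOD sInf (DeltaH M)]) : x ∈ lengthUnion M (k₁ + K) := by
  set d := sInf (DeltaH M)
  rcases le_or_gt x (k₁ + K + D) with hxD | hxD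
  · obtain ⟨t, rfl⟩ := eq_add_mul_of_modEq_of_le hxmod hx
    have htD : t ≤ D := (Nat.le_mul_of_pos_left t hd).trans (by omega)
    exact add_mul_mem_lengthUnion hu hy (by nlinarith)
  · obtain ⟨L, hL, hLx⟩ := not_bddAbove_iff.mp hunb (x - K)
    obtain ⟨w, hw, hw₁, hw₂⟩ :=
      exists_mem_lengthUnion_Icc hD hL (T := x - K - D) (by omega) (by omega)
    have hwx : w + K ≤ x := by omega
    obtain ⟨s, hs⟩ := eq_add_mul_of_modEq_of_le
      (hxmod.trans ((modEq_of_mem_lengthUnion hw).add_right K).symm) hwx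
    have hsD : s ≤ D := (Nat.le_mul_of_pos_left s hd).trans (by omega)
    have := add_mem_lengthUnion hw
      (add_mul_mem_lengthUnion hu hy (k := K) (j := s) (by nlinarith))
    rwa [← add_assoc, ← hs] at this

lemma mem_lengthUnion_of_not_bddAbove (hu : Irreducible u) (hd : 0 < sInf (DeltaH M))
    (hy : y + sInf (DeltaH M) ∈ lengthUnion M y) (hD : D ∈ upperBounds (DeltaH M))
    (hunb : ¬BddAbove (lengthUnion M k₁)) {k x : ℕ} (hk : k₁ + D * y ≤ k)
    (hx : k₁ + D * y ≤ x) (hxmod : x ≡ k [MOD sInf (DeltaH M)]) : x ∈ lengthUnion M k := by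
  rcases le_total k x with hkx | hxk
  · have := mem_lengthUnion_add_of_not_bddAbove hu hd hy hD hunb (K := k - k₁) (x := x)
      (by omega) (by omega) (by rwa [Nat.add_sub_cancel' (by omega)])
    rwa [Nat.add_sub_cancel' (by omega)] at this
  · have := mem_lengthUnion_add_of_not_bddAbove hu hd hy hD hunb (K := x - k₁) (x := k)
      (by omega) (by omega) (by rw [Nat.add_sub_cancel' (by omega)]; exact hxmod.symm)
    exact lengthUnion_symm (by rwa [Nat.add_sub_cancel' (by omega)] at this)

theorem isAAP_lengthUnion_of_not_bddAbove (hne : (DeltaH M).Nonempty)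
    (hbdd : BddAbove (DeltaH M)) (hunb : ¬BddAbove (lengthUnion M k₁)) :
    ∃ kstar Mstar : ℕ, 0 < kstar ∧ 0 < Mstar ∧ ∀ k : ℕ, kstar ≤ k →
      IsAAP (sInf (DeltaH M)) Mstar ((Nat.cast : ℕ → ℤ) '' lengthUnion M k) := by
  set d := sInf (DeltaH M)
  have hd : 0 < d := pos_of_mem_deltaH (Nat.sInf_mem hne)
  obtain ⟨D, hD⟩ := hbdd
  obtain ⟨y, hy⟩ := exists_add_sInf_deltaH_mem_lengthUnion hne
  obtain ⟨u, hu⟩ := exists_irreducible_of_mem_lengthUnion hy (by omega)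
  set kA := k₁ + D * y
  refine ⟨kA + 1, kA + d, by omega, by omega, fun k hk => ?_⟩
  -- the first element `≥ kA` of the residue class of `k`
  set z := kA + (k - kA) % d
  have hzk : z ≡ k [MOD d] := by
    have := Nat.div_add_mod (k - kA) d
    exact (Nat.modEq_iff_dvd' (by omega)).mpr ⟨(k - kA) / d, by omega⟩
  refine isAAP_of_forall_add_mul_mem hd (fun v hv => (modEq_of_mem_lengthUnion hv).trans hzk.symm)
    (fun v _ => by have := Nat.mod_lt (k - kA) hd; omega) fun n => ?_
  show z + d * n ∈ _
  exact mem_lengthUnion_of_not_bddAbove hu hd hy hD hunb (by omega) (by omega)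
    ((Nat.add_mul_mod_self_left z d n).trans hzk)

end UnboundedElasticity

lemma exists_le_lt_add_of_le_succ_add {f : ℕ → ℕ} {a n x c : ℕ} (han : a ≤ n)
    (hstep : ∀ i, a ≤ i → i < n → f i ≤ f (i + 1) + c) (ha : x < f a) (hn : f n ≤ x) :
    ∃ i, a < i ∧ i ≤ n ∧ f i ≤ x ∧ x < f i + c := by
  induction n, han using Nat.le_induction with
  | base => omega
  | succ n han ih =>
    by_cases hfn : f n ≤ x
    · obtain ⟨i, hai, hin, hi⟩ := ih (fun i h₁ h₂ => hstep i h₁ (by omega)) hfn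
      exact ⟨i, hai, by omega, hi⟩
    · have := hstep n han (by omega)
      exact ⟨n + 1, by omega, le_rfl, hn, by omega⟩

section BoundedIncrements

variable {M : Type*} [Monoid M] {u : M} {y c : ℕ}

lemma sSup_lengthUnion_le_add_mul
    (hstep : ∀ k, 2 ≤ k → sSup (lengthUnion M k) ≤ sSup (lengthUnion M (k - 1)) + c)
    {j : ℕ} (hj : 1 ≤ j) (h : ℕ) :
    sSup (lengthUnion M (j + h)) ≤ sSup (lengthUnion M j) + h * c := by
  induction h with
  | zero => simp
  | succ h ih =>
    have := hstep (j + (h + 1)) (by omega)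
    rw [show j + (h + 1) - 1 = j + h by omega] at this
    rw [add_mul, one_mul]
    omega

lemma sSup_lengthUnion_add_le (hu : Irreducible u)
    (hbdd : ∀ k, 1 ≤ k → BddAbove (lengthUnion M k)) {j : ℕ} (hj : 1 ≤ j) (h : ℕ) :
    sSup (lengthUnion M j) + h ≤ sSup (lengthUnion M (j + h)) :=
  le_csSup (hbdd _ (by omega)) <| add_mem_lengthUnion
    (Nat.sSup_mem ⟨j, self_mem_lengthUnion hu j⟩ (hbdd j hj)) (self_mem_lengthUnion hu h)

variable [IsDedekindFiniteMonoid M]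

lemma lengthUnion_one (hu : Irreducible u) : lengthUnion M 1 = {1} :=
  Set.eq_singleton_iff_unique_mem.mpr
    ⟨self_mem_lengthUnion hu 1, fun _ hx => eq_one_of_mem_lengthUnion_one hx⟩

/-- Here `x - ρ_{k-i} = i + d j` with `j < c`, which lies in `U_i` because `j y ≤ c y < i`. -/
lemma mem_lengthUnion_of_sSup_add_le (hu : Irreducible u) (hd : 0 < sInf (DeltaH M))
    (hy : y + sInf (DeltaH M) ∈ lengthUnion M y)
    (hbdd : ∀ k, 1 ≤ k → BddAbove (lengthUnion M k)) {k i x : ℕ} (hi : c * y < i) (hik : i < k)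
    (hxmod : x ≡ k [MOD sInf (DeltaH M)]) (h₁ : sSup (lengthUnion M (k - i)) + i ≤ x)
    (h₂ : x < sSup (lengthUnion M (k - i)) + i + c) : x ∈ lengthUnion M k := by
  have hR : sSup (lengthUnion M (k - i)) ∈ lengthUnion M (k - i) :=
    Nat.sSup_mem ⟨_, self_mem_lengthUnion hu _⟩ (hbdd _ (by omega))
  have hmod : x ≡ sSup (lengthUnion M (k - i)) + i [MOD sInf (DeltaH M)] := by
    refine hxmod.trans ?_
    simpa [Nat.sub_add_cancel hik.le] using ((modEq_of_mem_lengthUnion hR).add_right i).symm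
  obtain ⟨j, hj⟩ := eq_add_mul_of_modEq_of_le hmod h₁
  have hjc : j < c := (Nat.le_mul_of_pos_left j hd).trans_lt (by omega)
  have := add_mem_lengthUnion hR
    (add_mul_mem_lengthUnion hu hy (k := i) (j := j) (by nlinarith))
  rwa [Nat.sub_add_cancel hik.le, ← add_assoc, ← hj] at this

/-- `i ↦ ρ_{k-i} + i` runs from `ρ_k > x` down to `ρ_1 + (k - 1) = k ≤ x` in steps of less than
`c`, so it lands just below `x` at some `i > c y`. -/
lemma mem_lengthUnion_of_add_lt_sSup (hu : Irreducible u) (hd : 0 < sInf (DeltaH M))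
    (hy : y + sInf (DeltaH M) ∈ lengthUnion M y)
    (hbdd : ∀ k, 1 ≤ k → BddAbove (lengthUnion M k))
    (hstep : ∀ k, 2 ≤ k → sSup (lengthUnion M k) ≤ sSup (lengthUnion M (k - 1)) + c)
    {k x : ℕ} (hk : 1 ≤ k) (hkx : k ≤ x) (hxmod : x ≡ k [MOD sInf (DeltaH M)])
    (hx : x + (c * y + 1) * c < sSup (lengthUnion M k)) : x ∈ lengthUnion M k := by
  set a := c * y + 1
  have hR₁ : sSup (lengthUnion M 1) = 1 := by rw [lengthUnion_one hu, csSup_singleton]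
  have hRk : sSup (lengthUnion M k) ≤ 1 + (k - 1) * c := by
    simpa [hR₁, Nat.add_sub_cancel' hk] using sSup_lengthUnion_le_add_mul hstep le_rfl (k - 1)
  have hak : a < k - 1 := Nat.lt_of_mul_lt_mul_right (a := c) (by omega)
  have hRa : sSup (lengthUnion M k) ≤ sSup (lengthUnion M (k - a)) + a * c := by
    simpa [Nat.sub_add_cancel (show a ≤ k by omega)] using
      sSup_lengthUnion_le_add_mul hstep (j := k - a) (by omega) a
  obtain ⟨i, hai, hik, h₁, h₂⟩ := exists_le_lt_add_of_le_succ_add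
    (f := fun i => sSup (lengthUnion M (k - i)) + i) (x := x) (c := c) hak.le
    (fun i _ hi => by
      have := hstep (k - i) (by omega)
      rw [show k - i - 1 = k - (i + 1) by omega] at this
      omega)
    (by omega) (by simp only [show k - (k - 1) = 1 by omega, hR₁]; omega)
  exact mem_lengthUnion_of_sSup_add_le hu hd hy hbdd (by omega) (by omega) hxmod h₁ h₂

/-- Below `k` one argues symmetrically: `k ∈ U_x` because `ρ_x ≥ ρ_λ + (x - λ) ≥ k + (x - λ)`
for `λ = min U_k`. -/
lemma mem_lengthUnion_of_add_le_of_add_le_sSup (hu : Irreducible u) (hd : 0 < sInf (DeltaH M))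
    (hy : y + sInf (DeltaH M) ∈ lengthUnion M y)
    (hbdd : ∀ k, 1 ≤ k → BddAbove (lengthUnion M k))
    (hstep : ∀ k, 2 ≤ k → sSup (lengthUnion M k) ≤ sSup (lengthUnion M (k - 1)) + c)
    {k x : ℕ} (hk : 1 ≤ k) (hxmod : x ≡ k [MOD sInf (DeltaH M)])
    (hlow : sInf (lengthUnion M k) + ((c * y + 1) * c + 1) ≤ x)
    (hhigh : x + ((c * y + 1) * c + 1) ≤ sSup (lengthUnion M k)) : x ∈ lengthUnion M k := by
  rcases le_total k x with hkx | hxk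
  · exact mem_lengthUnion_of_add_lt_sSup hu hd hy hbdd hstep hk hkx hxmod (by omega)
  · set l := sInf (lengthUnion M k)
    have hl : l ∈ lengthUnion M k := Nat.sInf_mem ⟨k, self_mem_lengthUnion hu k⟩
    have hl₁ : 1 ≤ l := pos_of_mem_lengthUnion hl hk
    have hkl : k ≤ sSup (lengthUnion M l) := le_csSup (hbdd l hl₁) (lengthUnion_symm hl)
    have := sSup_lengthUnion_add_le hu hbdd hl₁ (x - l)
    rw [Nat.add_sub_cancel' (by omega)] at this
    exact lengthUnion_symm
      (mem_lengthUnion_of_add_lt_sSup hu hd hy hbdd hstep (by omega) hxk hxmod.symm (by omega))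

theorem isAAP_lengthUnion_of_sSup_le_add (hne : (DeltaH M).Nonempty)
    (hbdd : ∀ k, 1 ≤ k → BddAbove (lengthUnion M k))
    (hstep : ∀ k, 2 ≤ k → sSup (lengthUnion M k) ≤ sSup (lengthUnion M (k - 1)) + c) :
    ∃ Mstar : ℕ, 0 < Mstar ∧ ∀ k : ℕ, 1 ≤ k →
      IsAAP (sInf (DeltaH M)) Mstar ((Nat.cast : ℕ → ℤ) '' lengthUnion M k) := by
  set d := sInf (DeltaH M)
  have hd : 0 < d := pos_of_mem_deltaH (Nat.sInf_mem hne)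
  obtain ⟨y, hy⟩ := exists_add_sInf_deltaH_mem_lengthUnion hne
  obtain ⟨u, hu⟩ := exists_irreducible_of_mem_lengthUnion hy (by omega)
  set m := (c * y + 1) * c + 1
  have hm : m ≤ d * m := Nat.le_mul_of_pos_left m hd
  refine ⟨d * m + d + m, by omega, fun k hk => ?_⟩
  set l := sInf (lengthUnion M k)
  set R := sSup (lengthUnion M k)
  have hl : l ∈ lengthUnion M k := Nat.sInf_mem ⟨k, self_mem_lengthUnion hu k⟩
  have hR : ∀ v ∈ lengthUnion M k, v ≤ R := fun v hv => le_csSup (hbdd k hk) hv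
  have hmod : ∀ v ∈ lengthUnion M k, v ≡ l [MOD d] := fun v hv =>
    (modEq_of_mem_lengthUnion hv).trans (modEq_of_mem_lengthUnion hl).symm
  by_cases hsmall : R < l + d * m + m
  · refine isAAP_of_forall_add_mul_mem_of_le hd (c := 0) hmod
      (fun v hv => by have := Nat.sInf_le hv; omega) (fun v hv => by have := hR v hv; omega)
      fun n hn => by simpa [Nat.le_zero.mp hn] using hl
  · -- the progression runs from `l + d m` to its last term below `R - m`
    set z := l + d * m
    have hzl : z ≡ l [MOD d] := Nat.add_mul_mod_self_left l d m
    have := Nat.div_add_mod (R - m - z) d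
    refine isAAP_of_forall_add_mul_mem_of_le hd (c := (R - m - z) / d)
      (fun v hv => (hmod v hv).trans hzl.symm) (fun v hv => by have := Nat.sInf_le hv; omega)
      (fun v hv => by have := hR v hv; have := Nat.mod_lt (R - m - z) hd; omega) fun n hn => ?_
    have := Nat.mul_le_mul_left d hn
    exact mem_lengthUnion_of_add_le_of_add_le_sSup hu hd hy hbdd hstep hk
      ((Nat.add_mul_mod_self_left z d n).trans (hzl.trans (modEq_of_mem_lengthUnion hl)))
      (by omega) (by omega)

end BoundedIncrements

section Elasticities

variable {M : Type*} [Monoid M]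

lemma rhoK_ne_top_iff_bddAbove {k : ℕ} : rhoK M k ≠ ⊤ ↔ BddAbove (lengthUnion M k) := by
  constructor
  · intro h
    obtain ⟨n, hn⟩ := ENNReal.exists_nat_gt h
    refine ⟨n, fun x hx => ?_⟩
    have : (x : ℝ≥0∞) < n := (le_biSup (fun ℓ : ℕ => (ℓ : ℝ≥0∞)) hx).trans_lt hn
    exact_mod_cast this.le
  · rintro ⟨n, hn⟩
    exact ne_top_of_le_ne_top (ENNReal.natCast_ne_top n)
      (iSup₂_le fun ℓ hℓ => Nat.cast_le.mpr (hn hℓ))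

lemma rhoK_eq_sSup {k : ℕ} (hne : (lengthUnion M k).Nonempty)
    (hbdd : BddAbove (lengthUnion M k)) : rhoK M k = (sSup (lengthUnion M k) : ℕ) :=
  le_antisymm (iSup₂_le fun _ hℓ => Nat.cast_le.mpr (le_csSup hbdd hℓ))
    (le_biSup (fun ℓ : ℕ => (ℓ : ℝ≥0∞)) (Nat.sSup_mem hne hbdd))

variable [IsDedekindFiniteMonoid M]

theorem isAAP_lengthUnion_of_rhoK_le_add (hne : (DeltaH M).Nonempty) {c : ℕ}
    (hc : ∀ k : ℕ, 2 ≤ k → rhoK M k ≤ rhoK M (k - 1) + c) :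
    ∃ Mstar : ℕ, 0 < Mstar ∧ ∀ k : ℕ, 1 ≤ k →
      IsAAP (sInf (DeltaH M)) Mstar ((Nat.cast : ℕ → ℤ) '' lengthUnion M k) := by
  obtain ⟨y, hy⟩ := exists_add_sInf_deltaH_mem_lengthUnion hne
  obtain ⟨u, hu⟩ := exists_irreducible_of_mem_lengthUnion hy
    (by have := pos_of_mem_deltaH (Nat.sInf_mem hne); omega)
  have hbdd : ∀ k, 1 ≤ k → BddAbove (lengthUnion M k) := by
    intro k hk
    induction k, hk using Nat.le_induction with
    | base => simp [lengthUnion_one hu]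
    | succ k hk ih =>
      have hne_top : rhoK M k + c ≠ ⊤ :=
        ENNReal.add_ne_top.mpr ⟨rhoK_ne_top_iff_bddAbove.mpr ih, ENNReal.natCast_ne_top c⟩
      exact rhoK_ne_top_iff_bddAbove.mp
        (ne_top_of_le_ne_top hne_top (by simpa using hc (k + 1) (by omega)))
  refine isAAP_lengthUnion_of_sSup_le_add (c := c) hne hbdd fun k hk => ?_
  have := hc k hk
  rwa [rhoK_eq_sSup ⟨k, self_mem_lengthUnion hu k⟩ (hbdd k (by omega)),
    rhoK_eq_sSup ⟨k - 1, self_mem_lengthUnion hu (k - 1)⟩ (hbdd (k - 1) (by omega)),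
    ← Nat.cast_add, Nat.cast_le] at this

end Elasticities

theorem stmt8_general {M : Type*} [CancelMonoid M]
    (hfin : (DeltaH M).Finite) (hne : (DeltaH M).Nonempty)
    (hhyp : (∃ k : ℕ, 1 ≤ k ∧ rhoK M k = ⊤) ∨
      ∃ Mb : ℕ, ∀ k : ℕ, 2 ≤ k → rhoK M k ≤ rhoK M (k - 1) + (Mb : ℝ≥0∞)) :
    (∃ kstar Mstar : ℕ, 0 < kstar ∧ 0 < Mstar ∧ ∀ k : ℕ, kstar ≤ k →
      IsAAP (sInf (DeltaH M)) Mstar ((Nat.cast : ℕ → ℤ) '' lengthUnion M k)) ∧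
    ((∀ k : ℕ, 1 ≤ k → rhoK M k < ⊤) →
      ∃ Mstar : ℕ, 0 < Mstar ∧ ∀ k : ℕ, 1 ≤ k →
        IsAAP (sInf (DeltaH M)) Mstar ((Nat.cast : ℕ → ℤ) '' lengthUnion M k)) := by
  rcases hhyp with ⟨k₁, hk₁, htop⟩ | ⟨Mb, hMb⟩
  · have hunb : ¬BddAbove (lengthUnion M k₁) := fun h => rhoK_ne_top_iff_bddAbove.mpr h htop
    exact ⟨isAAP_lengthUnion_of_not_bddAbove hne hfin.bddAbove hunb,
      fun hlt => absurd (hlt k₁ hk₁) (by simp [htop])⟩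
  · obtain ⟨Mstar, hMstar, hAAP⟩ := isAAP_lengthUnion_of_rhoK_le_add hne hMb
    exact ⟨⟨1, Mstar, one_pos, hMstar, fun k => hAAP k⟩, fun _ => ⟨Mstar, hMstar, hAAP⟩⟩

theorem stmt8 {M : Type*} [CancelMonoid M] (hA : Atomic M)
    (hfin : (DeltaH M).Finite) (hne : (DeltaH M).Nonempty)
    (hhyp : (∃ k : ℕ, 1 ≤ k ∧ rhoK M k = ⊤) ∨
      ∃ Mb : ℕ, ∀ k : ℕ, 2 ≤ k → rhoK M k ≤ rhoK M (k - 1) + (Mb : ℝ≥0∞)) :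
    (∃ kstar Mstar : ℕ, 0 < kstar ∧ 0 < Mstar ∧ ∀ k : ℕ, kstar ≤ k →
      IsAAP (sInf (DeltaH M)) Mstar ((Nat.cast : ℕ → ℤ) '' lengthUnion M k)) ∧
    ((∀ k : ℕ, 1 ≤ k → rhoK M k < ⊤) →
      ∃ Mstar : ℕ, 0 < Mstar ∧ ∀ k : ℕ, 1 ≤ k →
        IsAAP (sInf (DeltaH M)) Mstar ((Nat.cast : ℕ → ℤ) '' lengthUnion M k)) :=
  stmt8_general hfin hne hhyp
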